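/- Let 0 < r < 1. An invertible bounded operator S on a complex Hilbert space H belongs to the class 𝒬A_r if and only if (r⁻²+r²)·I − S*S − S⁻¹S⁻* = 0. -/
import Mathlib


open ContinuousLinearMap

variable {H : Type*} [NormedAddCommGroup H] [InnerProductSpace ℂ H] [CompleteSpace H]

/-- `S ∈ 𝒬A_r`: there are orthogonal projections `P₀, P₁` with `P₀ + P₁ = I` and
`S*S = r² • P₀ + r⁻² • P₁`. -/
def MemScriptQA (r : ℝ) (S : H →L[ℂ] H) : Prop :=
  ∃ P₀ P₁ : H →L[ℂ] H, IsSelfAdjoint P₀ ∧ IsSelfAdjoint P₁ ∧ P₀ * P₀ = P₀ ∧ P₁ * P₁ = P₁ ∧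
    P₀ + P₁ = 1 ∧ adjoint S * S = ((r : ℂ) ^ 2) • P₀ + ((r : ℂ)⁻¹ ^ 2) • P₁

/-- `J ∈ 𝒞_{1,r}`: there are orthogonal projections `P₀, P₁` with `P₀ + P₁ = I` and
`J*J = P₀ + r² • P₁`. -/
def MemScriptC1r (r : ℝ) (J : H →L[ℂ] H) : Prop :=
  ∃ P₀ P₁ : H →L[ℂ] H, IsSelfAdjoint P₀ ∧ IsSelfAdjoint P₁ ∧ P₀ * P₀ = P₀ ∧ P₁ * P₁ = P₁ ∧
    P₀ + P₁ = 1 ∧ adjoint J * J = P₀ + ((r : ℂ) ^ 2) • P₁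

set_option maxHeartbeats 1000000 in
theorem stmt4 (r : ℝ) (hr0 : 0 < r) (hr1 : r < 1) (S : H →L[ℂ] H) (hS : IsUnit S) :
    MemScriptQA r S ↔
      ((r : ℂ)⁻¹ ^ 2 + (r : ℂ) ^ 2) • (1 : H →L[ℂ] H) - adjoint S * S -
        Ring.inverse S * adjoint (Ring.inverse S) = 0 := by
  have hrC : (r : ℂ) ≠ 0 := by exact_mod_cast hr0.ne'
  have hmul : S * Ring.inverse S = 1 := Ring.mul_inverse_cancel _ hS
  have hmul' : Ring.inverse S * S = 1 := Ring.inverse_mul_cancel _ hS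
  have hTQ : (adjoint S * S) * (Ring.inverse S * adjoint (Ring.inverse S)) = 1 := by
    have h1 : (adjoint S * S) * (Ring.inverse S * adjoint (Ring.inverse S))
        = adjoint S * (S * Ring.inverse S) * adjoint (Ring.inverse S) := by noncomm_ring
    rw [h1, hmul, mul_one, ← star_eq_adjoint, ← star_eq_adjoint, ← star_mul, hmul', star_one]
  have hQT : (Ring.inverse S * adjoint (Ring.inverse S)) * (adjoint S * S) = 1 := by
    have h1 : (Ring.inverse S * adjoint (Ring.inverse S)) * (adjoint S * S)
        = Ring.inverse S * (adjoint (Ring.inverse S) * adjoint S) * S := by noncomm_ring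
    rw [h1, ← star_eq_adjoint, ← star_eq_adjoint, ← star_mul, hmul, star_one, mul_one, hmul']
  have hTsa : star (adjoint S * S) = adjoint S * S := by
    simp [← star_eq_adjoint, star_mul]
  have hrr : (r : ℂ) ^ 2 * (r : ℂ)⁻¹ ^ 2 = 1 := by field_simp
  have hrr' : (r : ℂ)⁻¹ ^ 2 * (r : ℂ) ^ 2 = 1 := by rw [mul_comm]; exact hrr
  constructor
  · rintro ⟨P₀, P₁, h₀, h₁, hi₀, hi₁, hsum, hTeq⟩
    have h01 : P₀ * P₁ = 0 := by
      have h := congrArg (P₀ * ·) hsum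
      simp only [mul_add, hi₀, mul_one] at h
      exact add_left_cancel (h.trans (add_zero P₀).symm)
    have h10 : P₁ * P₀ = 0 := by
      have h := congrArg (· * P₀) hsum
      simp only [add_mul, hi₀, one_mul] at h
      exact add_left_cancel (h.trans (add_zero P₀).symm)
    have hTR : (adjoint S * S) * (((r : ℂ)⁻¹ ^ 2) • P₀ + ((r : ℂ) ^ 2) • P₁) = 1 := by
      rw [hTeq]
      simp only [add_mul, mul_add, smul_mul_assoc, mul_smul_comm, smul_smul, hi₀, hi₁,
        h01, h10, smul_zero, add_zero, zero_add, hrr, hrr', one_smul]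
      rw [hsum]
    have hQR : Ring.inverse S * adjoint (Ring.inverse S)
        = ((r : ℂ)⁻¹ ^ 2) • P₀ + ((r : ℂ) ^ 2) • P₁ := by
      calc Ring.inverse S * adjoint (Ring.inverse S)
          = (Ring.inverse S * adjoint (Ring.inverse S)) * 1 := (mul_one _).symm
        _ = (Ring.inverse S * adjoint (Ring.inverse S)) *
              ((adjoint S * S) * (((r : ℂ)⁻¹ ^ 2) • P₀ + ((r : ℂ) ^ 2) • P₁)) := by rw [hTR]
        _ = ((Ring.inverse S * adjoint (Ring.inverse S)) * (adjoint S * S)) *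
              (((r : ℂ)⁻¹ ^ 2) • P₀ + ((r : ℂ) ^ 2) • P₁) := (mul_assoc _ _ _).symm
        _ = _ := by rw [hQT, one_mul]
    rw [hQR, hTeq, ← hsum]
    module
  · intro h
    have hQeq : Ring.inverse S * adjoint (Ring.inverse S)
        = ((r : ℂ)⁻¹ ^ 2 + (r : ℂ) ^ 2) • (1 : H →L[ℂ] H) - adjoint S * S :=
      (sub_eq_zero.mp h).symm
    have hchar : (adjoint S * S) * (adjoint S * S)
        = ((r : ℂ)⁻¹ ^ 2 + (r : ℂ) ^ 2) • (adjoint S * S) - 1 := by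
      have h2 := hTQ
      rw [hQeq, mul_sub, mul_smul_comm, mul_one] at h2
      rw [eq_sub_iff_add_eq, ← h2]
      abel
    have hcC : (r : ℂ)⁻¹ ^ 2 - (r : ℂ) ^ 2 ≠ 0 := by
      have hcast : (r : ℂ)⁻¹ ^ 2 - (r : ℂ) ^ 2 = ((r⁻¹ ^ 2 - r ^ 2 : ℝ) : ℂ) := by
        push_cast; ring
      rw [hcast]
      rw [Complex.ofReal_ne_zero]
      have h1 : r ^ 2 < 1 := by nlinarith
      have h2 : (1 : ℝ) < (r ^ 2)⁻¹ := (one_lt_inv₀ (by positivity)).mpr h1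
      rw [← inv_pow] at h2
      intro hzero
      nlinarith
    set A : H →L[ℂ] H := (r : ℂ)⁻¹ ^ 2 • 1 - adjoint S * S with hAdef
    set B : H →L[ℂ] H := adjoint S * S - (r : ℂ) ^ 2 • 1 with hBdef
    set c : ℂ := (r : ℂ)⁻¹ ^ 2 - (r : ℂ) ^ 2 with hcdef
    have hA : A * A = c • A := by
      rw [hAdef, hcdef]
      simp only [sub_mul, mul_sub, smul_mul_assoc, mul_smul_comm, mul_one, one_mul,
        smul_smul, hchar]
      match_scalars <;> (first | ring1 | linear_combination hrr)
    have hB : B * B = c • B := by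
      rw [hBdef, hcdef]
      simp only [sub_mul, mul_sub, smul_mul_assoc, mul_smul_comm, mul_one, one_mul,
        smul_smul, hchar]
      match_scalars <;> (first | ring1 | linear_combination hrr)
    have hcc : starRingEnd ℂ c = c := by
      rw [hcdef]; simp [map_sub, map_pow, map_inv₀, Complex.conj_ofReal]
    refine ⟨c⁻¹ • A, c⁻¹ • B, ?_, ?_, ?_, ?_, ?_, ?_⟩
    · rw [IsSelfAdjoint]
      rw [star_smul, hAdef, star_sub, star_smul, star_one, hTsa]
      simp [map_inv₀, hcc, Complex.conj_ofReal, map_pow]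
    · rw [IsSelfAdjoint]
      rw [star_smul, hBdef, star_sub, star_smul, star_one, hTsa]
      simp [map_inv₀, hcc, Complex.conj_ofReal, map_pow]
    · rw [smul_mul_assoc, mul_smul_comm, smul_smul, hA, smul_smul]
      congr 1
      field_simp
    · rw [smul_mul_assoc, mul_smul_comm, smul_smul, hB, smul_smul]
      congr 1
      field_simp
    · rw [← smul_add]
      have hAB : A + B = c • 1 := by rw [hAdef, hBdef, hcdef]; module
      rw [hAB, smul_smul, inv_mul_cancel₀ hcC, one_smul]
    · have key : (r : ℂ) ^ 2 • A + (r : ℂ)⁻¹ ^ 2 • B = c • (adjoint S * S) := by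
        rw [hAdef, hBdef, hcdef]; module
      rw [smul_comm ((r:ℂ)^2) c⁻¹ A, smul_comm ((r:ℂ)⁻¹^2) c⁻¹ B, ← smul_add, key,
        smul_smul, inv_mul_cancel₀ hcC, one_smul]
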